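/- arXiv:1805.11858 — 2 statements merged into one kernel-verified Lean document; each statement's English description precedes it below -/
import Mathlib

section
/- Let (π,H) be a time-variant semi-conjugacy from a control system Σ₁ to a control system Σ₂, let (K,Q) be an admissible pair for Σ₁ with π_t(Q) ⊆ π₀(Q) for all t > 0. Then (π₀(K), π₀(Q)) is an admissible pair for Σ₂ and P_inv(f∘H, K, Q; Σ₁) ≥ P_inv(f, π₀(K), π₀(Q); Σ₂) for all f ∈ C(U₂,ℝ). -/
open scoped ENNReal
open Filter Set

noncomputable section

variable {M V : Type*}

/-- `S` is a `(τ,K,Q)`-spanning set of control functions. -/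
def IsSpanningSet (φ : ℝ → M → (ℝ → V) → M) (𝒰 : Set (ℝ → V)) (τ : ℝ)
    (K Q : Set M) (S : Set (ℝ → V)) : Prop :=
  S ⊆ 𝒰 ∧ ∀ x ∈ K, ∃ ω ∈ S, ∀ t ∈ Set.Icc (0:ℝ) τ, φ t x ω ∈ Q

/-- `(S_τ f)(ω) = ∫₀^τ f(ω(t)) dt`. -/
def birkhoff (f : V → ℝ) (τ : ℝ) (ω : ℝ → V) : ℝ := ∫ t in (0:ℝ)..τ, f (ω t)

/-- `Σ_{ω ∈ S} e^{(S_τ f)(ω)}`, valued in `ℝ≥0∞`. -/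
def spanSum (f : V → ℝ) (τ : ℝ) (S : Set (ℝ → V)) : ℝ≥0∞ :=
  ∑' ω : S, ENNReal.ofReal (Real.exp (birkhoff f τ ω.1))

/-- `a_τ(f,K,Q)`: infimum of the exponential sums over `(τ,K,Q)`-spanning sets. -/
def aInv (φ : ℝ → M → (ℝ → V) → M) (𝒰 : Set (ℝ → V)) (f : V → ℝ) (τ : ℝ)
    (K Q : Set M) : ℝ≥0∞ :=
  ⨅ (S : Set (ℝ → V)) (_ : IsSpanningSet φ 𝒰 τ K Q S), spanSum f τ S

/-- `r_inv(τ,K,Q)`: minimal cardinality of a `(τ,K,Q)`-spanning set. -/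
def rInv (φ : ℝ → M → (ℝ → V) → M) (𝒰 : Set (ℝ → V)) (τ : ℝ) (K Q : Set M) : ℝ≥0∞ :=
  ⨅ (S : Set (ℝ → V)) (_ : IsSpanningSet φ 𝒰 τ K Q S), (S.encard : ℝ≥0∞)

/-- Invariance pressure `P_inv(f,K,Q) = limsup_{τ→∞} (1/τ) log a_τ(f,K,Q)`. -/
def Pinv (φ : ℝ → M → (ℝ → V) → M) (𝒰 : Set (ℝ → V)) (f : V → ℝ) (K Q : Set M) : EReal :=
  Filter.limsup (fun τ : ℝ => ((τ : EReal))⁻¹ * ENNReal.log (aInv φ 𝒰 f τ K Q)) Filter.atTop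

/-- Invariance entropy `h_inv(K,Q) = limsup_{τ→∞} (1/τ) log r_inv(τ,K,Q)`. -/
def hInv (φ : ℝ → M → (ℝ → V) → M) (𝒰 : Set (ℝ → V)) (K Q : Set M) : EReal :=
  Filter.limsup (fun τ : ℝ => ((τ : EReal))⁻¹ * ENNReal.log (rInv φ 𝒰 τ K Q)) Filter.atTop

/-- `(K,Q)` is an admissible pair. -/
def Admissible [TopologicalSpace M] (φ : ℝ → M → (ℝ → V) → M) (𝒰 : Set (ℝ → V))
    (K Q : Set M) : Prop :=
  IsCompact K ∧ K ⊆ Q ∧ ∀ x ∈ K, ∃ ω ∈ 𝒰, ∀ t : ℝ, 0 ≤ t → φ t x ω ∈ Q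

/-- Concatenation `ω₁ ∙_τ ω₂` of two control functions at time `τ`. -/
def concatCtrl (τ : ℝ) (ω₁ ω₂ : ℝ → V) : ℝ → V := fun t => if t ≤ τ then ω₁ t else ω₂ (t - τ)

/-- Cocycle property of the solution map. -/
def Cocycle (φ : ℝ → M → (ℝ → V) → M) : Prop :=
  ∀ (t s : ℝ), 0 ≤ t → 0 ≤ s → ∀ (x : M) (ω : ℝ → V),
    φ (t + s) x ω = φ t (φ s x ω) (fun r => ω (r + s))

/-- `𝒰` is closed under concatenation of controls. -/
def ConcatClosed (𝒰 : Set (ℝ → V)) : Prop :=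
  ∀ ω₁ ∈ 𝒰, ∀ ω₂ ∈ 𝒰, ∀ τ : ℝ, 0 < τ → concatCtrl τ ω₁ ω₂ ∈ 𝒰

/-- `Q` is controlled invariant. -/
def ControlledInvariant (φ : ℝ → M → (ℝ → V) → M) (𝒰 : Set (ℝ → V)) (Q : Set M) : Prop :=
  ∀ x ∈ Q, ∃ ω ∈ 𝒰, ∀ t : ℝ, 0 ≤ t → φ t x ω ∈ Q

/-- The positive orbit `O⁺(x)`. -/
def posOrbit (φ : ℝ → M → (ℝ → V) → M) (𝒰 : Set (ℝ → V)) (x : M) : Set M :=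
  {y | ∃ t : ℝ, 0 < t ∧ ∃ ω ∈ 𝒰, φ t x ω = y}

/-- `Q` satisfies the no-return property. -/
def NoReturn (φ : ℝ → M → (ℝ → V) → M) (𝒰 : Set (ℝ → V)) (Q : Set M) : Prop :=
  ∀ x ∈ Q, ∀ τ : ℝ, 0 < τ → ∀ ω ∈ 𝒰, φ τ x ω ∈ Q → ∀ t ∈ Set.Icc (0:ℝ) τ, φ t x ω ∈ Q

/-- `D` is a control set: controlled invariant, approximately controllable, and maximal. -/
def IsControlSet [TopologicalSpace M] (φ : ℝ → M → (ℝ → V) → M) (𝒰 : Set (ℝ → V))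
    (D : Set M) : Prop :=
  D.Nonempty ∧ ControlledInvariant φ 𝒰 D ∧ (∀ x ∈ D, D ⊆ closure (posOrbit φ 𝒰 x)) ∧
    ∀ D' : Set M, D ⊆ D' → ControlledInvariant φ 𝒰 D' →
      (∀ x ∈ D', D' ⊆ closure (posOrbit φ 𝒰 x)) → D' = D

end

/-! The image under `ω ↦ H ∘ ω` of a `(τ,K,Q)`-spanning set is `(τ,π₀(K),π₀(Q))`-spanning, and
since `S_τ f (H ∘ ω) = S_τ (f ∘ H) ω` its exponential sum is at most that of the original set.
Hence `a_τ` can only decrease along the semi-conjugacy, and so can its exponential growth rate. -/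

section SemiConjugacy

variable {M₁ M₂ V₁ V₂ : Type*} {φ₁ : ℝ → M₁ → (ℝ → V₁) → M₁} {φ₂ : ℝ → M₂ → (ℝ → V₂) → M₂}
  {𝒰₁ : Set (ℝ → V₁)} {𝒰₂ : Set (ℝ → V₂)} {K₁ Q₁ : Set M₁} {K₂ Q₂ : Set M₂}

theorem spanSum_image_le (f : V₂ → ℝ) (g : (ℝ → V₁) → (ℝ → V₂)) (τ : ℝ) (S : Set (ℝ → V₁)) :
    spanSum f τ (g '' S) ≤ ∑' ω : S, ENNReal.ofReal (Real.exp (birkhoff f τ (g ω))) :=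
  ENNReal.tsum_le_tsum_comp_of_surjective (imageFactorization_surjective (f := g) (s := S)) _

theorem spanSum_image_comp_le (f : V₂ → ℝ) (H : V₁ → V₂) (τ : ℝ) (S : Set (ℝ → V₁)) :
    spanSum f τ ((fun ω t => H (ω t)) '' S) ≤ spanSum (fun u => f (H u)) τ S :=
  spanSum_image_le f _ τ S

theorem aInv_le_aInv_of_image_isSpanningSet {f₁ : V₁ → ℝ} {f₂ : V₂ → ℝ} {τ : ℝ}
    (g : (ℝ → V₁) → (ℝ → V₂))
    (hspan : ∀ S, IsSpanningSet φ₁ 𝒰₁ τ K₁ Q₁ S → IsSpanningSet φ₂ 𝒰₂ τ K₂ Q₂ (g '' S))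
    (hsum : ∀ S, spanSum f₂ τ (g '' S) ≤ spanSum f₁ τ S) :
    aInv φ₂ 𝒰₂ f₂ τ K₂ Q₂ ≤ aInv φ₁ 𝒰₁ f₁ τ K₁ Q₁ :=
  le_iInf₂ fun S hS => (iInf₂_le _ (hspan S hS)).trans (hsum S)

theorem Pinv_le_Pinv_of_aInv_le {f₁ : V₁ → ℝ} {f₂ : V₂ → ℝ}
    (h : ∀ᶠ τ in atTop, aInv φ₂ 𝒰₂ f₂ τ K₂ Q₂ ≤ aInv φ₁ 𝒰₁ f₁ τ K₁ Q₁) :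
    Pinv φ₂ 𝒰₂ f₂ K₂ Q₂ ≤ Pinv φ₁ 𝒰₁ f₁ K₁ Q₁ := by
  refine limsup_le_limsup ((h.and (eventually_ge_atTop 0)).mono fun τ ⟨hτ, hτ0⟩ => ?_)
  exact mul_le_mul_of_nonneg_left (ENNReal.log_monotone hτ)
    (EReal.inv_nonneg_of_nonneg (EReal.coe_nonneg.2 hτ0))

variable {π : ℝ → M₁ → M₂} {H : V₁ → V₂} {K Q : Set M₁}

theorem semiconj_mem_image_of_mem
    (hconj : ∀ t : ℝ, 0 ≤ t → ∀ (x : M₁), ∀ ω ∈ 𝒰₁,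
      π t (φ₁ t x ω) = φ₂ t (π 0 x) (fun s => H (ω s)))
    (hπQ : ∀ t : ℝ, 0 < t → π t '' Q ⊆ π 0 '' Q) {t : ℝ} (ht : 0 ≤ t) {x : M₁}
    {ω : ℝ → V₁} (hω : ω ∈ 𝒰₁) (hQ : φ₁ t x ω ∈ Q) :
    φ₂ t (π 0 x) (fun s => H (ω s)) ∈ π 0 '' Q := by
  rw [← hconj t ht x ω hω]
  rcases ht.eq_or_lt with rfl | ht
  · exact mem_image_of_mem _ hQ
  · exact hπQ t ht (mem_image_of_mem _ hQ)

theorem IsSpanningSet.image_semiconj (hH𝒰 : ∀ ω ∈ 𝒰₁, (fun t => H (ω t)) ∈ 𝒰₂)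
    (hconj : ∀ t : ℝ, 0 ≤ t → ∀ (x : M₁), ∀ ω ∈ 𝒰₁,
      π t (φ₁ t x ω) = φ₂ t (π 0 x) (fun s => H (ω s)))
    (hπQ : ∀ t : ℝ, 0 < t → π t '' Q ⊆ π 0 '' Q) {τ : ℝ} {S : Set (ℝ → V₁)}
    (hS : IsSpanningSet φ₁ 𝒰₁ τ K Q S) :
    IsSpanningSet φ₂ 𝒰₂ τ (π 0 '' K) (π 0 '' Q) ((fun ω t => H (ω t)) '' S) := by
  obtain ⟨hS𝒰, hspan⟩ := hS
  refine ⟨image_subset_iff.2 fun ω hω => hH𝒰 ω (hS𝒰 hω), ?_⟩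
  rintro _ ⟨x, hx, rfl⟩
  obtain ⟨ω, hωS, hωQ⟩ := hspan x hx
  exact ⟨_, mem_image_of_mem _ hωS, fun t ht =>
    semiconj_mem_image_of_mem hconj hπQ ht.1 (hS𝒰 hωS) (hωQ t ht)⟩

theorem Admissible.image_semiconj [TopologicalSpace M₁] [TopologicalSpace M₂]
    (hπ₀ : Continuous (π 0)) (hH𝒰 : ∀ ω ∈ 𝒰₁, (fun t => H (ω t)) ∈ 𝒰₂)
    (hconj : ∀ t : ℝ, 0 ≤ t → ∀ (x : M₁), ∀ ω ∈ 𝒰₁,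
      π t (φ₁ t x ω) = φ₂ t (π 0 x) (fun s => H (ω s)))
    (hπQ : ∀ t : ℝ, 0 < t → π t '' Q ⊆ π 0 '' Q) (hadm : Admissible φ₁ 𝒰₁ K Q) :
    Admissible φ₂ 𝒰₂ (π 0 '' K) (π 0 '' Q) := by
  obtain ⟨hK, hKQ, hstay⟩ := hadm
  refine ⟨hK.image hπ₀, image_mono hKQ, ?_⟩
  rintro _ ⟨x, hx, rfl⟩
  obtain ⟨ω, hω, hωQ⟩ := hstay x hx
  exact ⟨_, hH𝒰 ω hω, fun t ht => semiconj_mem_image_of_mem hconj hπQ ht hω (hωQ t ht)⟩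

end SemiConjugacy

theorem stmt11_general {M₁ M₂ V₁ V₂ : Type*} [TopologicalSpace M₁] [TopologicalSpace M₂]
    (φ₁ : ℝ → M₁ → (ℝ → V₁) → M₁) (φ₂ : ℝ → M₂ → (ℝ → V₂) → M₂)
    (𝒰₁ : Set (ℝ → V₁)) (𝒰₂ : Set (ℝ → V₂))
    (π : ℝ → M₁ → M₂) (H : V₁ → V₂)
    (hπcont : Continuous fun p : ℝ × M₁ => π p.1 p.2)
    (hH𝒰 : ∀ ω ∈ 𝒰₁, (fun t => H (ω t)) ∈ 𝒰₂)
    (hconj : ∀ t : ℝ, 0 ≤ t → ∀ (x : M₁), ∀ ω ∈ 𝒰₁,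
      π t (φ₁ t x ω) = φ₂ t (π 0 x) (fun s => H (ω s)))
    (K Q : Set M₁) (hadm : Admissible φ₁ 𝒰₁ K Q)
    (hπQ : ∀ t : ℝ, 0 < t → π t '' Q ⊆ π 0 '' Q)
    (f : V₂ → ℝ) :
    Admissible φ₂ 𝒰₂ (π 0 '' K) (π 0 '' Q) ∧
    Pinv φ₂ 𝒰₂ f (π 0 '' K) (π 0 '' Q) ≤ Pinv φ₁ 𝒰₁ (fun u => f (H u)) K Q := by
  have hπ₀ : Continuous (π 0) := hπcont.comp (continuous_const.prodMk continuous_id)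
  refine ⟨hadm.image_semiconj hπ₀ hH𝒰 hconj hπQ, Pinv_le_Pinv_of_aInv_le (.of_forall fun τ => ?_)⟩
  exact aInv_le_aInv_of_image_isSpanningSet _
    (fun S hS => hS.image_semiconj hH𝒰 hconj hπQ) (spanSum_image_comp_le f H τ)

/-- a time-variant semi-conjugacy `(π,H)` maps an admissible pair `(K,Q)`
of `Σ₁` to an admissible pair `(π₀(K),π₀(Q))` of `Σ₂` and the pressure decreases:
`P_inv(f∘H,K,Q;Σ₁) ≥ P_inv(f,π₀(K),π₀(Q);Σ₂)`. -/
theorem stmt11 {M₁ M₂ V₁ V₂ : Type*} [TopologicalSpace M₁] [TopologicalSpace M₂]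
    [TopologicalSpace V₁] [TopologicalSpace V₂]
    (φ₁ : ℝ → M₁ → (ℝ → V₁) → M₁) (φ₂ : ℝ → M₂ → (ℝ → V₂) → M₂)
    (𝒰₁ : Set (ℝ → V₁)) (𝒰₂ : Set (ℝ → V₂)) (U₂ : Set V₂)
    (π : ℝ → M₁ → M₂) (H : V₁ → V₂)
    (hπcont : Continuous fun p : ℝ × M₁ => π p.1 p.2) (hHcont : Continuous H)
    (hH𝒰 : ∀ ω ∈ 𝒰₁, (fun t => H (ω t)) ∈ 𝒰₂)
    (hconj : ∀ t : ℝ, 0 ≤ t → ∀ (x : M₁), ∀ ω ∈ 𝒰₁,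
      π t (φ₁ t x ω) = φ₂ t (π 0 x) (fun s => H (ω s)))
    (K Q : Set M₁) (hadm : Admissible φ₁ 𝒰₁ K Q)
    (hπQ : ∀ t : ℝ, 0 < t → π t '' Q ⊆ π 0 '' Q)
    (f : V₂ → ℝ) (hf : Continuous f) :
    Admissible φ₂ 𝒰₂ (π 0 '' K) (π 0 '' Q) ∧
    Pinv φ₂ 𝒰₂ f (π 0 '' K) (π 0 '' Q) ≤ Pinv φ₁ 𝒰₁ (fun u => f (H u)) K Q :=
  stmt11_general φ₁ φ₂ 𝒰₁ 𝒰₂ π H hπcont hH𝒰 hconj K Q hadm hπQ f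
end

section
/- For the one-dimensional linear control system ẋ(t) = a x(t) + ω(t) with a > 0 and control range U = [−1,1]: the interval D = (−1/a, 1/a) is controlled invariant and satisfies approximate controllability (D ⊆ closure(O⁺(x)) for all x ∈ D), the equilibrium pair is (x₀,u₀) = (−u₀/a, u₀) for u₀ ∈ int U, and for any f ∈ C([−1,1],ℝ) attaining its infimum at some u₀ ∈ (−1,1), and any compact K ⊆ D with nonempty interior, the invariance pressure satisfies P_inv(f,K,cl D) = inf f + a. -/
open scoped ENNReal
open Filter Set

noncomputable section

/-- Solution map of the scalar linear control system `ẋ = a x + ω`. -/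
def scalarPhi (a : ℝ) (t x : ℝ) (ω : ℝ → ℝ) : ℝ :=
  Real.exp (a * t) * x + ∫ s in (0:ℝ)..t, Real.exp (a * (t - s)) * ω s

/-!
With a constant control `u` the solution is explicit, `e^{at} (x + u/a) - u/a`, so `-u/a` is the
equilibrium of `u` and, from inside `D`, every point is reached by a constant control. This gives
the first three claims.

For the pressure, `a_τ(f, K, Q)` is squeezed between two multiples of `e^{(f u₀ + a) τ}`. Upper
bound: trajectories separate like `e^{at}`, so it suffices to steer the points of a grid in `K` of
mesh `≈ e^{-aτ}` to the equilibrium `-u₀/a` within a fixed time `T` and to rest there with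
control `u₀`; each of these `≈ e^{aτ}` controls has Birkhoff sum `τ f u₀ + O(1)`. Lower bound:
for a fixed control, the initial values kept in `Q` up to time `τ` form an interval of length
`2 e^{-aτ}/a`, so `≈ e^{aτ}` controls are needed, and each has Birkhoff sum at least `τ f u₀`
because `f` is minimal at `u₀`.
-/

open MeasureTheory intervalIntegral Filter Set Topology Real

abbrev unitControls : Set (ℝ → ℝ) := {ω | ∀ t, ω t ∈ Icc (-1 : ℝ) 1}

section ScalarSystem

variable {a : ℝ}

lemma scalarPhi_sub (a t x y : ℝ) (ω : ℝ → ℝ) :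
    scalarPhi a t x ω - scalarPhi a t y ω = exp (a * t) * (x - y) := by
  unfold scalarPhi; ring

lemma scalarPhi_congr {t : ℝ} (ht : 0 ≤ t) (x : ℝ) {ω ω' : ℝ → ℝ} (h : EqOn ω ω' (Icc 0 t)) :
    scalarPhi a t x ω = scalarPhi a t x ω' := by
  unfold scalarPhi
  congr 1
  refine integral_congr fun s hs => ?_
  rw [uIcc_of_le ht] at hs
  simp only [h hs]

lemma scalarPhi_const (ha : a ≠ 0) (t x u : ℝ) :
    scalarPhi a t x (fun _ => u) = exp (a * t) * (x + u / a) - u / a := by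
  have hint : ∫ s in (0 : ℝ)..t, exp (a * (t - s)) = (exp (a * t) - 1) / a := by
    rw [integral_comp_sub_left (fun s => exp (a * s)), integral_comp_mul_left _ ha,
      integral_exp]
    simp [div_eq_inv_mul]
  unfold scalarPhi
  rw [intervalIntegral.integral_mul_const, hint]
  field_simp
  ring

lemma scalarPhi_equilibrium (ha : a ≠ 0) (t u : ℝ) :
    scalarPhi a t (-(u / a)) (fun _ => u) = -(u / a) := by
  rw [scalarPhi_const ha]; ring

def steerValue (a t x y : ℝ) : ℝ := a * (y - exp (a * t) * x) / (exp (a * t) - 1)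

lemma scalarPhi_steerValue (ha : a ≠ 0) {t : ℝ} (ht : t ≠ 0) (x y : ℝ) :
    scalarPhi a t x (fun _ => steerValue a t x y) = y := by
  have : exp (a * t) - 1 ≠ 0 := sub_ne_zero.2 (by simpa using mul_ne_zero ha ht)
  rw [scalarPhi_const ha, steerValue]
  field_simp
  ring

lemma abs_steerValue_le (ha : 0 < a) {t : ℝ} (ht : 0 < t) (x y : ℝ) :
    |steerValue a t x y| ≤ a * |x| + a * |y - x| / (exp (a * t) - 1) := by
  have hE : 0 < exp (a * t) - 1 := sub_pos.2 (one_lt_exp_iff.2 (mul_pos ha ht))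
  have : steerValue a t x y = -(a * x) + a * (y - x) / (exp (a * t) - 1) := by
    rw [steerValue]; field_simp; ring
  rw [this]
  refine (abs_add_le _ _).trans_eq ?_
  rw [abs_neg, abs_div, abs_mul, abs_mul, abs_of_pos ha, abs_of_pos hE]

lemma tendsto_div_exp_sub_one (ha : 0 < a) (d : ℝ) :
    Tendsto (fun t => d / (exp (a * t) - 1)) atTop (𝓝 0) :=
  tendsto_const_nhds.div_atTop <| tendsto_atTop_add_const_right _ (-1) <|
    tendsto_exp_atTop.comp (tendsto_id.const_mul_atTop ha)

lemma eventually_abs_steerValue_le_one (ha : 0 < a) {c : ℝ} (hc : a * c < 1) (d : ℝ) :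
    ∀ᶠ t in atTop, 0 < t ∧ ∀ x y, |x| ≤ c → |y - x| ≤ d → |steerValue a t x y| ≤ 1 := by
  filter_upwards [eventually_gt_atTop 0, (tendsto_div_exp_sub_one ha (a * d)).eventually
    (ge_mem_nhds (sub_pos.2 hc))] with t ht hsmall
  refine ⟨ht, fun x y hx hy => (abs_steerValue_le ha ht x y).trans ?_⟩
  have hE : 0 < exp (a * t) - 1 := sub_pos.2 (one_lt_exp_iff.2 (mul_pos ha ht))
  have : a * |y - x| / (exp (a * t) - 1) ≤ a * d / (exp (a * t) - 1) := by gcongr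
  nlinarith [mul_le_mul_of_nonneg_left hx ha.le]

end ScalarSystem

section Controllability

variable {a : ℝ}

lemma mul_abs_lt_one_of_mem_Ioo (ha : 0 < a) {x : ℝ} (hx : x ∈ Ioo (-(1 / a)) (1 / a)) :
    a * |x| < 1 :=
  (lt_div_iff₀' ha).1 (abs_lt.2 hx)

lemma controlledInvariant_Ioo (ha : 0 < a) :
    ControlledInvariant (scalarPhi a) unitControls (Ioo (-(1 / a)) (1 / a)) := by
  intro x hx
  have hax : |-(a * x)| ≤ 1 := by
    rw [abs_neg, abs_mul, abs_of_pos ha]; exact (mul_abs_lt_one_of_mem_Ioo ha hx).le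
  refine ⟨fun _ => -(a * x), fun _ => abs_le.1 hax, fun t _ => ?_⟩
  have h := scalarPhi_equilibrium ha.ne' t (-(a * x))
  rw [neg_div, neg_neg, mul_div_cancel_left₀ x ha.ne'] at h
  rwa [h]

lemma posOrbit_eq_univ (ha : 0 < a) {x : ℝ} (hx : a * |x| < 1) :
    posOrbit (scalarPhi a) unitControls x = univ := by
  refine eq_univ_of_forall fun y => ?_
  obtain ⟨t, ht, hsteer⟩ := (eventually_abs_steerValue_le_one ha hx |y - x|).exists
  exact ⟨t, ht, fun _ => steerValue a t x y, fun _ => abs_le.1 (hsteer x y le_rfl le_rfl),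
    scalarPhi_steerValue ha.ne' ht.ne' x y⟩

end Controllability

section Concatenation

variable {V : Type*}

lemma integral_concatCtrl (F : ℝ → V → ℝ) {T t : ℝ} (hT : 0 ≤ T) (hTt : T ≤ t)
    {ω₁ ω₂ : ℝ → V} (h₁ : IntervalIntegrable (fun s => F s (ω₁ s)) volume 0 T)
    (h₂ : IntervalIntegrable (fun s => F (s + T) (ω₂ s)) volume 0 (t - T)) :
    ∫ s in (0 : ℝ)..t, F s (concatCtrl T ω₁ ω₂ s) =
      (∫ s in (0 : ℝ)..T, F s (ω₁ s)) + ∫ s in (0 : ℝ)..(t - T), F (s + T) (ω₂ s) := by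
  have e₁ : EqOn (fun s => F s (concatCtrl T ω₁ ω₂ s)) (fun s => F s (ω₁ s)) (uIoc 0 T) := by
    intro s hs
    rw [uIoc_of_le hT] at hs
    simp [concatCtrl, hs.2]
  have e₂ : EqOn (fun s => F s (concatCtrl T ω₁ ω₂ s))
      (fun s => F (s - T + T) (ω₂ (s - T))) (uIoc T t) := by
    intro s hs
    rw [uIoc_of_le hTt] at hs
    simp [concatCtrl, not_le.2 hs.1]
  have h₂' : IntervalIntegrable (fun s => F (s - T + T) (ω₂ (s - T))) volume T t := by
    simpa using h₂.comp_sub_right T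
  rw [← integral_add_adjacent_intervals (h₁.congr e₁.symm) (h₂'.congr e₂.symm),
    integral_congr_ae (Eventually.of_forall fun s hs => e₁ hs),
    integral_congr_ae (Eventually.of_forall fun s hs => e₂ hs),
    integral_comp_sub_right (fun s => F (s + T) (ω₂ s)), sub_self]

lemma birkhoff_concatCtrl (f : V → ℝ) {T τ : ℝ} (hT : 0 ≤ T) (hTτ : T ≤ τ) {ω₁ ω₂ : ℝ → V}
    (h₁ : IntervalIntegrable (fun s => f (ω₁ s)) volume 0 T)
    (h₂ : IntervalIntegrable (fun s => f (ω₂ s)) volume 0 (τ - T)) :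
    birkhoff f τ (concatCtrl T ω₁ ω₂) = birkhoff f T ω₁ + birkhoff f (τ - T) ω₂ :=
  integral_concatCtrl (fun _ v => f v) hT hTτ h₁ h₂

lemma birkhoff_const (f : V → ℝ) (τ : ℝ) (u : V) :
    birkhoff f τ (fun _ => u) = τ * f u := by
  simp [birkhoff]

lemma concatClosed_setOf_forall_mem (s : Set V) :
    ConcatClosed {ω : ℝ → V | ∀ t, ω t ∈ s} := by
  intro ω₁ h₁ ω₂ h₂ T _ t
  unfold concatCtrl
  split_ifs
  exacts [h₁ t, h₂ (t - T)]

end Concatenation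

section Steering

variable {a : ℝ}

lemma scalarPhi_concatCtrl {T t : ℝ} (hT : 0 ≤ T) (hTt : T ≤ t) (x : ℝ) {ω₁ ω₂ : ℝ → ℝ}
    (h₁ : IntervalIntegrable ω₁ volume 0 T) (h₂ : IntervalIntegrable ω₂ volume 0 (t - T)) :
    scalarPhi a t x (concatCtrl T ω₁ ω₂) = scalarPhi a (t - T) (scalarPhi a T x ω₁) ω₂ := by
  have hk : ∀ {c d : ℝ} {ω : ℝ → ℝ} (b : ℝ), IntervalIntegrable ω volume c d →
      IntervalIntegrable (fun s => exp (a * (b - s)) * ω s) volume c d := fun b h =>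
    h.continuousOn_mul (by fun_prop)
  unfold scalarPhi
  rw [integral_concatCtrl (fun s v => exp (a * (t - s)) * v) hT hTt (hk t h₁)
    (by simpa [sub_add_eq_sub_sub_swap] using hk (t - T) h₂)]
  have hsplit : ∫ s in (0 : ℝ)..T, exp (a * (t - s)) * ω₁ s =
      exp (a * (t - T)) * ∫ s in (0 : ℝ)..T, exp (a * (T - s)) * ω₁ s := by
    rw [← intervalIntegral.integral_const_mul]
    congr 1 with s
    rw [← mul_assoc, ← exp_add]
    ring_nf
  have hexp : exp (a * t) = exp (a * (t - T)) * exp (a * T) := by rw [← exp_add]; ring_nf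
  rw [hsplit, hexp]
  ring_nf

lemma scalarPhi_const_mem_uIcc (ha : 0 < a) {t T : ℝ} (ht : 0 ≤ t) (htT : t ≤ T) (x u : ℝ) :
    scalarPhi a t x (fun _ => u) ∈ uIcc x (scalarPhi a T x (fun _ => u)) := by
  have h₁ : 1 ≤ exp (a * t) := one_le_exp (by positivity)
  have h₂ : exp (a * t) ≤ exp (a * T) := exp_le_exp.2 (by gcongr)
  rw [scalarPhi_const ha.ne', scalarPhi_const ha.ne', mem_uIcc]
  rcases le_total 0 (x + u / a) with hw | hw
  · left; constructor <;> nlinarith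
  · right; constructor <;> nlinarith

/-- Steer `z` to the equilibrium `-(u₀ / a)` of `u₀` in time `T`, then rest there. -/
def steerCtrl (a T u₀ z : ℝ) : ℝ → ℝ :=
  concatCtrl T (fun _ => steerValue a T z (-(u₀ / a))) fun _ => u₀

lemma steerCtrl_mem_unitControls {T u₀ z : ℝ} (hT : 0 < T) (hu₀ : |u₀| ≤ 1)
    (hv : |steerValue a T z (-(u₀ / a))| ≤ 1) : steerCtrl a T u₀ z ∈ unitControls :=
  concatClosed_setOf_forall_mem (Icc (-1) 1) _ (fun _ => abs_le.1 hv) _ (fun _ => abs_le.1 hu₀) T hT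

lemma abs_scalarPhi_steerCtrl_le (ha : 0 < a) {T u₀ z M t : ℝ} (hT : 0 < T) (hz : |z| ≤ M)
    (hu₀ : |u₀| / a ≤ M) (ht : 0 ≤ t) : |scalarPhi a t z (steerCtrl a T u₀ z)| ≤ M := by
  set v := steerValue a T z (-(u₀ / a))
  have hreach : scalarPhi a T z (fun _ => v) = -(u₀ / a) :=
    scalarPhi_steerValue ha.ne' hT.ne' _ _
  have hM : ∀ y ∈ uIcc z (-(u₀ / a)), |y| ≤ M := by
    refine fun y hy => abs_le.2 (ordConnected_Icc.uIcc_subset (abs_le.1 hz) (abs_le.1 ?_) hy)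
    rwa [abs_neg, abs_div, abs_of_pos ha]
  rcases le_total t T with htT | hTt
  · rw [scalarPhi_congr ht z (ω := steerCtrl a T u₀ z) (ω' := fun _ => v)
      fun s hs => if_pos (hs.2.trans htT)]
    exact hM _ (hreach ▸ scalarPhi_const_mem_uIcc ha ht htT z v)
  · rw [steerCtrl, scalarPhi_concatCtrl hT.le hTt z intervalIntegrable_const
      intervalIntegrable_const, hreach, scalarPhi_equilibrium ha.ne']
    exact hM _ right_mem_uIcc

lemma birkhoff_steerCtrl (f : ℝ → ℝ) {T τ : ℝ} (hT : 0 ≤ T) (hTτ : T ≤ τ) (u₀ z : ℝ) :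
    birkhoff f τ (steerCtrl a T u₀ z) =
      T * f (steerValue a T z (-(u₀ / a))) + (τ - T) * f u₀ := by
  rw [steerCtrl, birkhoff_concatCtrl f hT hTτ intervalIntegrable_const intervalIntegrable_const,
    birkhoff_const, birkhoff_const]

end Steering

section SpanSum

variable {M V : Type*}

lemma spanSum_le_encard_mul (f : V → ℝ) (τ b : ℝ) {S : Set (ℝ → V)}
    (hb : ∀ ω ∈ S, birkhoff f τ ω ≤ b) :
    spanSum f τ S ≤ S.encard * ENNReal.ofReal (exp b) := by
  rw [← ENNReal.tsum_set_const]
  exact ENNReal.tsum_le_tsum fun ω => ENNReal.ofReal_le_ofReal (exp_le_exp.2 (hb ω ω.2))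

lemma encard_mul_le_spanSum (f : V → ℝ) (τ b : ℝ) (S : Set (ℝ → V)) :
    {ω ∈ S | b ≤ birkhoff f τ ω}.encard * ENNReal.ofReal (exp b) ≤ spanSum f τ S := by
  rw [← ENNReal.tsum_set_const]
  calc ∑' _ : {ω ∈ S | b ≤ birkhoff f τ ω}, ENNReal.ofReal (exp b)
      ≤ ∑' ω : {ω ∈ S | b ≤ birkhoff f τ ω}, ENNReal.ofReal (exp (birkhoff f τ ω)) :=
        ENNReal.tsum_le_tsum fun ω => ENNReal.ofReal_le_ofReal (exp_le_exp.2 ω.2.2)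
    _ ≤ spanSum f τ S :=
        ENNReal.tsum_mono_subtype (fun ω => ENNReal.ofReal (exp (birkhoff f τ ω))) (sep_subset _ _)

lemma aInv_le_spanSum {φ : ℝ → M → (ℝ → V) → M} {𝒰 : Set (ℝ → V)} {f : V → ℝ} {τ : ℝ}
    {K Q : Set M} {S : Set (ℝ → V)} (hS : IsSpanningSet φ 𝒰 τ K Q S) :
    aInv φ 𝒰 f τ K Q ≤ spanSum f τ S :=
  iInf₂_le S hS

end SpanSum

section UpperBound

variable {a : ℝ}

lemma exists_finset_approx_Icc {c η : ℝ} (hc : 0 ≤ c) (hη : 0 < η) :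
    ∃ Z : Finset ℝ, (Z.card : ℝ) ≤ 2 * c / η + 2 ∧ (∀ z ∈ Z, |z| ≤ c) ∧
      ∀ x ∈ Icc (-c) c, ∃ z ∈ Z, |x - z| ≤ η := by
  set N := ⌈2 * c / η⌉₊
  refine ⟨(Finset.range (N + 1)).image fun i : ℕ => min c (-c + i * η), ?_, ?_, ?_⟩
  · have hN : (N : ℝ) < 2 * c / η + 1 := Nat.ceil_lt_add_one (by positivity)
    calc _ ≤ ((N + 1 : ℕ) : ℝ) := by
          exact_mod_cast Finset.card_image_le.trans (Finset.card_range _).le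
      _ ≤ 2 * c / η + 2 := by push_cast; linarith
  · simp only [Finset.mem_image]
    rintro _ ⟨i, -, rfl⟩
    exact abs_le.2 ⟨le_min (by linarith) (by nlinarith [(i.cast_nonneg : (0 : ℝ) ≤ i)]),
      min_le_left _ _⟩
  · rintro x ⟨hxl, hxr⟩
    have hx : 0 ≤ (x + c) / η := div_nonneg (by linarith) hη.le
    set i := ⌊(x + c) / η⌋₊
    have hi : (i : ℝ) * η ≤ x + c := (le_div_iff₀ hη).1 (Nat.floor_le hx)
    have hi' : x + c < (i + 1) * η := (div_lt_iff₀ hη).1 (Nat.lt_floor_add_one _)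
    refine ⟨-c + i * η, Finset.mem_image.2 ⟨i, ?_, min_eq_right (by linarith)⟩,
      abs_le.2 ⟨by nlinarith, by nlinarith⟩⟩
    have : i ≤ N := (Nat.floor_le_floor (by gcongr; linarith)).trans (Nat.floor_le_ceil _)
    simpa [Nat.lt_succ_iff] using this

lemma isSpanningSet_image_steerCtrl (ha : 0 < a) {T τ u₀ c ρ : ℝ} (hT : 0 < T) (hu₀ : |u₀| ≤ 1)
    (hsteer : ∀ z, |z| ≤ c → |steerValue a T z (-(u₀ / a))| ≤ 1)
    (hρ : max c (|u₀| / a) + ρ ≤ 1 / a) {K : Set ℝ} (hK : K ⊆ Icc (-c) c) {Z : Finset ℝ}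
    (hZc : ∀ z ∈ Z, |z| ≤ c) (hZ : ∀ x ∈ Icc (-c) c, ∃ z ∈ Z, |x - z| ≤ ρ * exp (-(a * τ))) :
    IsSpanningSet (scalarPhi a) unitControls τ K (Icc (-(1 / a)) (1 / a))
      (steerCtrl a T u₀ '' Z) := by
  refine ⟨?_, fun x hx => ?_⟩
  · rintro _ ⟨z, hz, rfl⟩
    exact steerCtrl_mem_unitControls hT hu₀ (hsteer z (hZc z hz))
  obtain ⟨z, hz, hxz⟩ := hZ x (hK hx)
  refine ⟨steerCtrl a T u₀ z, mem_image_of_mem _ hz, fun t ht => ?_⟩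
  have hcenter := abs_scalarPhi_steerCtrl_le (u₀ := u₀) ha hT ((hZc z hz).trans (le_max_left _ _))
    (le_max_right c _) ht.1
  have hspread : exp (a * t) * |x - z| ≤ ρ := by
    calc exp (a * t) * |x - z| ≤ exp (a * τ) * (ρ * exp (-(a * τ))) := by
          gcongr
          exact ht.2
      _ = ρ := by rw [mul_left_comm, ← exp_add, add_neg_cancel, exp_zero, mul_one]
  have hsub := scalarPhi_sub a t x z (steerCtrl a T u₀ z)
  rw [mem_Icc, ← abs_le, show scalarPhi a t x (steerCtrl a T u₀ z) =
    scalarPhi a t z (steerCtrl a T u₀ z) + exp (a * t) * (x - z) by linarith]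
  refine (abs_add_le _ _).trans ?_
  rw [abs_mul, abs_of_pos (exp_pos _)]
  linarith

lemma eventually_aInv_le (ha : 0 < a) {u₀ c F : ℝ} (hu₀ : |u₀| < 1) (hc : 0 ≤ c)
    (hac : a * c < 1) {K : Set ℝ} (hK : K ⊆ Icc (-c) c) {f : ℝ → ℝ}
    (hF : ∀ u ∈ Icc (-1 : ℝ) 1, f u ≤ F) :
    ∃ C > 0, ∀ᶠ τ in atTop, aInv (scalarPhi a) unitControls f τ K (Icc (-(1 / a)) (1 / a)) ≤
      ENNReal.ofReal (C * exp ((f u₀ + a) * τ)) := by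
  obtain ⟨T, hT, hsteer⟩ := (eventually_abs_steerValue_le_one ha hac (|u₀| / a + c)).exists
  have hsteer' : ∀ z, |z| ≤ c → |steerValue a T z (-(u₀ / a))| ≤ 1 := fun z hz =>
    hsteer z _ hz <| (abs_sub _ _).trans <| by rw [abs_neg, abs_div, abs_of_pos ha]; gcongr
  set ρ := 1 / a - max c (|u₀| / a)
  have hρ : 0 < ρ := by
    have h₁ : |u₀| / a < 1 / a := by gcongr
    have h₂ : c < 1 / a := by rw [lt_div_iff₀ ha]; linarith
    exact sub_pos.2 (max_lt h₂ h₁)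
  have hcρ : 0 ≤ 2 * c / ρ := div_nonneg (by linarith) hρ.le
  refine ⟨(2 * c / ρ + 2) * exp (T * (F - f u₀)), mul_pos (by linarith) (exp_pos _), ?_⟩
  filter_upwards [eventually_ge_atTop T] with τ hτ
  obtain ⟨Z, hZcard, hZc, hZ⟩ := exists_finset_approx_Icc hc (mul_pos hρ (exp_pos (-(a * τ))))
  have hspan := isSpanningSet_image_steerCtrl ha hT hu₀.le hsteer' (by simp [ρ]) hK hZc hZ
  have hbirk : ∀ ω ∈ steerCtrl a T u₀ '' Z, birkhoff f τ ω ≤ f u₀ * τ + T * (F - f u₀) := by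
    rintro _ ⟨z, hz, rfl⟩
    rw [birkhoff_steerCtrl f hT.le hτ]
    nlinarith [hF _ (abs_le.1 (hsteer' z (hZc z hz)))]
  have hcard : ((steerCtrl a T u₀ '' Z).encard : ℝ≥0∞) ≤ Z.card := by
    exact_mod_cast (encard_image_le _ _).trans (encard_coe_eq_coe_finsetCard Z).le
  have hgrid : (Z.card : ℝ) ≤ (2 * c / ρ + 2) * exp (a * τ) := by
    have : 2 * c / (ρ * exp (-(a * τ))) = 2 * c / ρ * exp (a * τ) := by
      rw [exp_neg]; field_simp
    nlinarith [one_le_exp (mul_nonneg ha.le (hT.le.trans hτ))]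
  calc aInv (scalarPhi a) unitControls f τ K (Icc (-(1 / a)) (1 / a))
      ≤ spanSum f τ (steerCtrl a T u₀ '' Z) := aInv_le_spanSum hspan
    _ ≤ _ := spanSum_le_encard_mul f τ _ hbirk
    _ ≤ (Z.card : ℝ≥0∞) * ENNReal.ofReal (exp (f u₀ * τ + T * (F - f u₀))) := by gcongr
    _ = ENNReal.ofReal (Z.card * exp (f u₀ * τ + T * (F - f u₀))) := by
      rw [ENNReal.ofReal_mul (by positivity), ENNReal.ofReal_natCast]
    _ ≤ ENNReal.ofReal ((2 * c / ρ + 2) * exp (T * (F - f u₀)) * exp ((f u₀ + a) * τ)) := by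
      refine ENNReal.ofReal_le_ofReal ?_
      calc (Z.card : ℝ) * exp (f u₀ * τ + T * (F - f u₀))
          ≤ (2 * c / ρ + 2) * exp (a * τ) * exp (f u₀ * τ + T * (F - f u₀)) := by gcongr
        _ = _ := by rw [mul_assoc, ← exp_add, mul_assoc, ← exp_add]; ring_nf

end UpperBound

section LowerBound

variable {a : ℝ}

lemma scalarPhi_of_not_intervalIntegrable {t : ℝ} (x : ℝ) {ω : ℝ → ℝ}
    (hω : ¬IntervalIntegrable ω volume 0 t) : scalarPhi a t x ω = exp (a * t) * x := by
  have hk : ¬IntervalIntegrable (fun s => exp (a * (t - s)) * ω s) volume 0 t := fun h => hω <| by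
    simpa [← mul_assoc, ← exp_add] using
      h.continuousOn_mul (g := fun s => exp (-(a * (t - s)))) (by fun_prop)
  simp [scalarPhi, intervalIntegral.integral_undef hk]

lemma volume_setOf_scalarPhi_mem_Icc (a t b : ℝ) (ω : ℝ → ℝ) :
    volume {x | scalarPhi a t x ω ∈ Icc (-b) b} = ENNReal.ofReal (2 * b * exp (-(a * t))) := by
  set c := ∫ s in (0 : ℝ)..t, exp (a * (t - s)) * ω s
  have hE := exp_pos (a * t)
  have : {x | scalarPhi a t x ω ∈ Icc (-b) b} =
      Icc ((-b - c) / exp (a * t)) ((b - c) / exp (a * t)) := by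
    ext x
    simp only [scalarPhi, mem_ofPred_eq, mem_Icc, div_le_iff₀ hE, le_div_iff₀ hE]
    constructor <;> rintro ⟨h₁, h₂⟩ <;> constructor <;> linarith
  rw [this, Real.volume_Icc, exp_neg]
  congr 1
  field_simp
  ring

lemma ContinuousOn.intervalIntegrable_comp {f : ℝ → ℝ} {p q : ℝ} (hf : ContinuousOn f (Icc p q))
    {ω : ℝ → ℝ} {b c : ℝ} (hω : IntervalIntegrable ω volume b c) (hmaps : ∀ t, ω t ∈ Icc p q) :
    IntervalIntegrable (fun t => f (ω t)) volume b c := by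
  have hpq : p ≤ q := (hmaps 0).1.trans (hmaps 0).2
  obtain ⟨F, hF⟩ := isCompact_Icc.exists_bound_of_continuousOn hf
  have hcomp : (fun t => f (ω t)) = fun t => IccExtend hpq ((Icc p q).domRestrict f) (ω t) :=
    funext fun t => (IccExtend_of_mem hpq ((Icc p q).domRestrict f) (hmaps t)).symm
  refine intervalIntegrable_const (c := F) |>.mono_fun' ?_
    (Eventually.of_forall fun t => hF _ (hmaps t))
  rw [hcomp]
  exact (hf.domRestrict.Icc_extend').comp_aestronglyMeasurable hω.def'.aestronglyMeasurable

lemma mul_le_birkhoff {f : ℝ → ℝ} {p q m τ : ℝ} (hτ : 0 ≤ τ) (hf : ContinuousOn f (Icc p q))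
    (hm : ∀ u ∈ Icc p q, m ≤ f u) {ω : ℝ → ℝ} (hω : IntervalIntegrable ω volume 0 τ)
    (hmaps : ∀ t, ω t ∈ Icc p q) : τ * m ≤ birkhoff f τ ω := by
  simpa [birkhoff] using intervalIntegral.integral_mono_on hτ intervalIntegrable_const
    (hf.intervalIntegrable_comp hω hmaps) fun t _ => hm _ (hmaps t)

lemma measure_le_encard_mul {ι α : Type*} [MeasurableSpace α] (μ : Measure α) {S : Set ι}
    {Y : ι → Set α} {A : Set α} {ℓ : ℝ≥0∞} (hℓ : ℓ ≠ 0) (hA : A ⊆ ⋃ i ∈ S, Y i)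
    (hY : ∀ i ∈ S, μ (Y i) ≤ ℓ) : μ A ≤ S.encard * ℓ := by
  rcases S.finite_or_infinite with hS | hS
  · calc μ A ≤ ∑' i : S, μ (Y i) := (measure_mono hA).trans (measure_biUnion_le μ hS.countable Y)
      _ ≤ ∑' _ : S, ℓ := ENNReal.tsum_le_tsum fun i => hY i i.2
      _ = S.encard * ℓ := ENNReal.tsum_set_const S ℓ
  · simp [hS.encard_eq, ENNReal.top_mul hℓ]

-- A non-integrable control has zero integral, so it serves only points whose free motion
-- `e^{aτ} x` stays in `Q`.
lemma sdiff_subset_biUnion_of_isSpanningSet (ha : 0 < a) {f : ℝ → ℝ}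
    (hf : ContinuousOn f (Icc (-1) 1)) {u₀ : ℝ} (hmin : ∀ u ∈ Icc (-1 : ℝ) 1, f u₀ ≤ f u)
    {τ : ℝ} (hτ : 0 < τ) {K : Set ℝ} {S : Set (ℝ → ℝ)}
    (hS : IsSpanningSet (scalarPhi a) unitControls τ K (Icc (-(1 / a)) (1 / a)) S) :
    K \ Icc (-(exp (-(a * τ)) / a)) (exp (-(a * τ)) / a) ⊆
      ⋃ ω ∈ {ω ∈ S | τ * f u₀ ≤ birkhoff f τ ω},
        {x | scalarPhi a τ x ω ∈ Icc (-(1 / a)) (1 / a)} := by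
  have hrE : exp (-(a * τ)) / a * exp (a * τ) = 1 / a := by
    rw [exp_neg]; field_simp
  rintro x ⟨hxK, hxr⟩
  obtain ⟨ω, hωS, hω⟩ := hS.2 x hxK
  have hQ := hω τ ⟨hτ.le, le_rfl⟩
  have hint : IntervalIntegrable ω volume 0 τ := by
    by_contra h
    rw [scalarPhi_of_not_intervalIntegrable x h] at hQ
    exact hxr ⟨le_of_mul_le_mul_right (by linarith [hQ.1]) (exp_pos (a * τ)),
      le_of_mul_le_mul_right (by linarith [hQ.2]) (exp_pos (a * τ))⟩
  exact mem_biUnion ⟨hωS, mul_le_birkhoff hτ.le hf hmin hint (hS.1 hωS)⟩ hQ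

lemma eventually_le_aInv (ha : 0 < a) {f : ℝ → ℝ} (hf : ContinuousOn f (Icc (-1) 1))
    {u₀ : ℝ} (hmin : ∀ u ∈ Icc (-1 : ℝ) 1, f u₀ ≤ f u) {K : Set ℝ} {m : ℝ} (hm : 0 < m)
    (hKm : ENNReal.ofReal m ≤ volume K) :
    ∀ᶠ τ in atTop, ENNReal.ofReal (m * a / 4 * exp ((f u₀ + a) * τ)) ≤
      aInv (scalarPhi a) unitControls f τ K (Icc (-(1 / a)) (1 / a)) := by
  have hr : Tendsto (fun τ => 2 * (exp (-(a * τ)) / a)) atTop (𝓝 0) := by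
    simpa using ((tendsto_exp_neg_atTop_nhds_zero.comp
      (tendsto_id.const_mul_atTop ha)).div_const a).const_mul 2
  filter_upwards [eventually_gt_atTop 0, hr.eventually (ge_mem_nhds (half_pos hm))]
    with τ hτ hrτ
  set r := exp (-(a * τ)) / a
  refine le_iInf₂ fun S hS => ?_
  set S' := {ω ∈ S | τ * f u₀ ≤ birkhoff f τ ω}
  have hvol : ENNReal.ofReal (m / 2) ≤ S'.encard * ENNReal.ofReal (2 * r) :=
    calc ENNReal.ofReal (m / 2) ≤ ENNReal.ofReal m - ENNReal.ofReal (2 * r) := by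
          rw [← ENNReal.ofReal_sub _ (by positivity)]
          exact ENNReal.ofReal_le_ofReal (by linarith)
      _ ≤ volume K - volume (Icc (-r) r) := by
          rw [Real.volume_Icc, sub_neg_eq_add, ← two_mul]
          gcongr
      _ ≤ volume (K \ Icc (-r) r) := le_measure_sdiff
      _ ≤ S'.encard * ENNReal.ofReal (2 * r) :=
          measure_le_encard_mul volume (by positivity)
            (sdiff_subset_biUnion_of_isSpanningSet ha hf hmin hτ hS) fun ω _ =>
              (volume_setOf_scalarPhi_mem_Icc a τ (1 / a) ω).trans (by simp only [r]; ring_nf) |>.le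
  have hcard : ENNReal.ofReal (m * a / 4 * exp (a * τ)) ≤ S'.encard := by
    have heq : m * a / 4 * exp (a * τ) * (2 * r) = m / 2 := by
      simp only [r, exp_neg]
      field_simp
      ring
    refine (ENNReal.mul_le_mul_iff_left (c := ENNReal.ofReal (2 * r)) (by positivity)
      ENNReal.ofReal_ne_top).1 ?_
    rwa [← ENNReal.ofReal_mul (by positivity), heq]
  calc ENNReal.ofReal (m * a / 4 * exp ((f u₀ + a) * τ))
      = ENNReal.ofReal (m * a / 4 * exp (a * τ)) * ENNReal.ofReal (exp (τ * f u₀)) := by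
        rw [← ENNReal.ofReal_mul (by positivity), mul_assoc, ← exp_add]
        ring_nf
    _ ≤ S'.encard * ENNReal.ofReal (exp (τ * f u₀)) := by gcongr
    _ ≤ spanSum f τ S := encard_mul_le_spanSum f τ _ S

end LowerBound

lemma limsup_inv_mul_log_eq_of_bounds {A : ℝ → ℝ≥0∞} {L C₁ C₂ : ℝ} (hC₁ : 0 < C₁)
    (hC₂ : 0 < C₂)
    (hlow : ∀ᶠ τ in atTop, ENNReal.ofReal (C₁ * exp (L * τ)) ≤ A τ)
    (hup : ∀ᶠ τ in atTop, A τ ≤ ENNReal.ofReal (C₂ * exp (L * τ))) :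
    limsup (fun τ : ℝ => (τ : EReal)⁻¹ * ENNReal.log (A τ)) atTop = L := by
  have hlog : ∀ {C : ℝ}, 0 < C → ∀ τ : ℝ,
      (τ : EReal)⁻¹ * ENNReal.log (ENNReal.ofReal (C * exp (L * τ))) =
        ((τ⁻¹ * (log C + L * τ) : ℝ) : EReal) := fun hC τ => by
    rw [ENNReal.log_ofReal_of_pos (by positivity), log_mul hC.ne' (exp_pos _).ne', log_exp,
      EReal.coe_mul, EReal.coe_inv]
  have hlim : ∀ C : ℝ,
      Tendsto (fun τ : ℝ => ((τ⁻¹ * (log C + L * τ) : ℝ) : EReal)) atTop (𝓝 L) := by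
    intro C
    have h : Tendsto (fun τ : ℝ => log C * τ⁻¹ + L) atTop (𝓝 (log C * 0 + L)) :=
      (tendsto_inv_atTop_zero.const_mul _).add_const L
    rw [mul_zero, zero_add] at h
    refine EReal.tendsto_coe.2 (h.congr' ?_)
    filter_upwards [eventually_ne_atTop 0] with τ hτ
    field_simp
  have hinv : ∀ᶠ τ : ℝ in atTop, 0 ≤ (τ : EReal)⁻¹ := by
    filter_upwards [eventually_ge_atTop 0] with τ hτ
    exact EReal.inv_nonneg_of_nonneg (EReal.coe_nonneg.2 hτ)
  refine Tendsto.limsup_eq (tendsto_of_tendsto_of_tendsto_of_le_of_le' (hlim C₁) (hlim C₂) ?_ ?_)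
  · filter_upwards [hlow, hinv] with τ h hτ
    rw [← hlog hC₁]
    exact mul_le_mul_of_nonneg_left (ENNReal.log_monotone h) hτ
  · filter_upwards [hup, hinv] with τ h hτ
    rw [← hlog hC₂]
    exact mul_le_mul_of_nonneg_left (ENNReal.log_monotone h) hτ

lemma IsCompact.exists_subset_Icc_of_subset_Ioo {K : Set ℝ} (hK : IsCompact K) (hne : K.Nonempty)
    {b : ℝ} (hKb : K ⊆ Ioo (-b) b) : ∃ c, 0 ≤ c ∧ c < b ∧ K ⊆ Icc (-c) c := by
  obtain ⟨x₀, hx₀, hmax⟩ := hK.exists_isMaxOn hne continuous_abs.continuousOn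
  exact ⟨|x₀|, abs_nonneg _, abs_lt.2 (hKb hx₀), fun x hx => abs_le.1 (hmax hx)⟩

/-- for `ẋ = ax + ω`, `a > 0`, `U = [-1,1]`: `D = (-1/a,1/a)` is controlled
invariant and approximately controllable, `(-u₀/a, u₀)` is an equilibrium pair for
`u₀ ∈ int U`, and for potentials attaining their minimum at an interior control value,
`P_inv(f,K,cl D) = inf f + a`. -/
theorem stmt18 (a : ℝ) (ha : 0 < a) :
    ControlledInvariant (scalarPhi a) {ω : ℝ → ℝ | ∀ t, ω t ∈ Set.Icc (-1:ℝ) 1}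
      (Set.Ioo (-(1/a)) (1/a)) ∧
    (∀ x ∈ Set.Ioo (-(1/a)) (1/a), Set.Ioo (-(1/a)) (1/a) ⊆
      closure (posOrbit (scalarPhi a) {ω : ℝ → ℝ | ∀ t, ω t ∈ Set.Icc (-1:ℝ) 1} x)) ∧
    (∀ u₀ ∈ Set.Ioo (-1:ℝ) 1, ∀ t : ℝ, 0 ≤ t →
      scalarPhi a t (-(u₀/a)) (fun _ => u₀) = -(u₀/a)) ∧
    ∀ f : ℝ → ℝ, ContinuousOn f (Set.Icc (-1:ℝ) 1) →
      ∀ u₀ ∈ Set.Ioo (-1:ℝ) 1, (∀ u ∈ Set.Icc (-1:ℝ) 1, f u₀ ≤ f u) →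
      ∀ K : Set ℝ, IsCompact K → K ⊆ Set.Ioo (-(1/a)) (1/a) → (interior K).Nonempty →
        Pinv (scalarPhi a) {ω : ℝ → ℝ | ∀ t, ω t ∈ Set.Icc (-1:ℝ) 1} f K
          (Set.Icc (-(1/a)) (1/a)) = ((f u₀ + a : ℝ) : EReal) := by
  refine ⟨controlledInvariant_Ioo ha, fun x hx => ?_,
    fun u₀ _ t _ => scalarPhi_equilibrium ha.ne' t u₀, ?_⟩
  · rw [posOrbit_eq_univ ha (mul_abs_lt_one_of_mem_Ioo ha hx), closure_univ]
    exact subset_univ _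
  intro f hf u₀ hu₀ hmin K hK hKD hKi
  obtain ⟨c, hc, hcb, hKc⟩ := hK.exists_subset_Icc_of_subset_Ioo (hKi.mono interior_subset) hKD
  obtain ⟨F, hF⟩ := isCompact_Icc.bddAbove_image hf
  obtain ⟨C, hC, hup⟩ := eventually_aInv_le ha (abs_lt.2 hu₀) hc ((lt_div_iff₀' ha).1 hcb) hKc
    fun u hu => hF (mem_image_of_mem f hu)
  have hKpos : 0 < volume K :=
    (isOpen_interior.measure_pos volume hKi).trans_le (measure_mono interior_subset)
  have hKfin : volume K ≠ ⊤ := hK.measure_lt_top.ne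
  have hm : 0 < (volume K).toReal := ENNReal.toReal_pos hKpos.ne' hKfin
  exact limsup_inv_mul_log_eq_of_bounds (by positivity) hC
    (eventually_le_aInv ha hf hmin hm (ENNReal.ofReal_toReal hKfin).le) hup

end
end
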